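/- Let p be a prime and let n, m, r be integers with 2 ≤ r ≤ n − 1 and n − r ≤ m. Then the group G(n,m,r) has order p^{n+m}, is non-abelian, and is powerfully nilpotent. -/

import Mathlib

/-- `H.pPow k` is the subgroup generated by the `k`-th powers of the elements of `H`. -/
def Subgroup.pPow {G : Type*} [Group G] (H : Subgroup G) (k : ℕ) : Subgroup G :=
  Subgroup.closure ((fun x => x ^ k) '' (H : Set G))

/-- A `p`-group `G` is powerful if `p` is odd and `[G,G] ≤ G^p`, or `p = 2` and `[G,G] ≤ G^4`. -/
def IsPowerfulGroup (p : ℕ) (G : Type*) [Group G] : Prop :=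
  IsPGroup p G ∧
    ((Odd p ∧ commutator G ≤ Subgroup.pPow ⊤ p) ∨
      (p = 2 ∧ commutator G ≤ Subgroup.pPow ⊤ 4))

/-- A powerful `p`-group is powerfully nilpotent if it has an ascending chain of subgroups
`⊥ = H 0 ≤ H 1 ≤ ⋯ ≤ H n = ⊤` that is powerfully central, i.e. `[H (i+1), G] ≤ (H i)^p`. -/
def IsPowerfullyNilpotent (p : ℕ) (G : Type*) [Group G] : Prop :=
  IsPowerfulGroup p G ∧
    ∃ (n : ℕ) (H : ℕ → Subgroup G), H 0 = ⊥ ∧ H n = ⊤ ∧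
      (∀ i < n, H i ≤ H (i + 1)) ∧
      ∀ i < n, ⁅H (i + 1), (⊤ : Subgroup G)⁆ ≤ (H i).pPow p

open scoped commutatorElement

/-- The relations of the presentation `⟨a, b ∣ a^(p^n) = 1, b^(p^m) = 1, [a,b] = a^(p^r)⟩`. -/
def splitRels (p n m r : ℕ) : Set (FreeGroup (Fin 2)) :=
  {FreeGroup.of (0 : Fin 2) ^ p ^ n, FreeGroup.of (1 : Fin 2) ^ p ^ m,
    ⁅FreeGroup.of (0 : Fin 2), FreeGroup.of (1 : Fin 2)⁆ * (FreeGroup.of (0 : Fin 2) ^ p ^ r)⁻¹}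

/-- The group `G(n,m,r) = ⟨a, b ∣ a^(p^n) = 1, b^(p^m) = 1, [a,b] = a^(p^r)⟩`. -/
abbrev GSplit (p n m r : ℕ) : Type := PresentedGroup (splitRels p n m r)

/-!
`G(n,m,r)` is the split metacyclic group `ℤ/pⁿ ⋊ ℤ/pᵐ` in which the generator `b` of `ℤ/pᵐ` acts
on `A = ℤ/pⁿ = ⟨a⟩` as multiplication by `u = 1 - p^r`. Since `r ≥ 2` (needed when `p = 2`), `u`
has order `p^(n-r)`, which divides `p^m`; so this semidirect product exists, its generators satisfy
the relations, and it is isomorphic to the presented group. It has order `p^(n+m)`, and it is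
non-abelian because `u ≠ 1`.

As `u ≡ 1 mod p^r`, commutators with `A_k = ⟨a^(p^k)⟩` lie in `A_(k+r) ≤ A_(k+2) ≤ A_(k+1)^p`,
and reducing the `A`-coordinate modulo `p^r` is a homomorphism to an abelian group with kernel
`A_r`, so `[G,G] ≤ A_r ≤ G^(p^2)`. Hence `G` is powerful, and `⊥ = A_n ≤ ⋯ ≤ A_0 ≤ G` is a
powerfully central chain.
-/

open Multiplicative SemidirectProduct

namespace Subgroup

variable {G G' : Type*} [Group G] [Group G']

theorem pPow_mono {H K : Subgroup G} (h : H ≤ K) (k : ℕ) : H.pPow k ≤ K.pPow k :=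
  closure_mono (Set.image_mono h)

theorem pow_mem_pPow {H : Subgroup G} {x : G} (hx : x ∈ H) (k : ℕ) : x ^ k ∈ H.pPow k :=
  subset_closure ⟨x, hx, rfl⟩

theorem pPow_mul_le (H : Subgroup G) (k l : ℕ) : H.pPow (k * l) ≤ H.pPow k := by
  refine (closure_le _).mpr ?_
  rintro _ ⟨x, hx, rfl⟩
  simp only [SetLike.mem_coe, pow_mul]
  exact pow_mem (pow_mem_pPow hx k) l

theorem map_pPow (f : G →* G') (H : Subgroup G) (k : ℕ) :
    (H.pPow k).map f = (H.map f).pPow k := by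
  simp only [pPow, MonoidHom.map_closure, coe_map, Set.image_image, map_pow]

end Subgroup

section Powerful

variable {G G' : Type*} [Group G] [Group G'] {p : ℕ}

theorem IsPowerfulGroup.of_commutator_le_pPow_sq (hp : p.Prime) (hG : IsPGroup p G)
    (h : commutator G ≤ (⊤ : Subgroup G).pPow (p ^ 2)) : IsPowerfulGroup p G := by
  refine ⟨hG, ?_⟩
  rcases hp.eq_two_or_odd' with rfl | hodd
  · exact Or.inr ⟨rfl, h⟩
  · exact Or.inl ⟨hodd, h.trans (sq p ▸ Subgroup.pPow_mul_le ⊤ p p)⟩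

theorem IsPowerfullyNilpotent.of_antitone (hG : IsPowerfulGroup p G) {A : ℕ → Subgroup G}
    {n : ℕ} (hA : Antitone A) (hbot : A n = ⊥)
    (hcomm : ∀ k, ⁅A k, ⊤⁆ ≤ (A (k + 1)).pPow p) (htop : commutator G ≤ (A 0).pPow p) :
    IsPowerfullyNilpotent p G := by
  refine ⟨hG, n + 1, fun i => if i ≤ n then A (n - i) else ⊤, by simp [hbot], by simp,
    fun i _ => ?_, fun i hi => ?_⟩
  · by_cases h : i + 1 ≤ n
    · simp only [h, show i ≤ n by omega, if_true]
      exact hA (by omega)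
    · simp only [h, if_false]
      exact le_top
  · by_cases h : i + 1 ≤ n
    · simp only [h, show i ≤ n by omega, if_true]
      simpa only [show n - (i + 1) + 1 = n - i by omega] using hcomm (n - (i + 1))
    · simp only [h, show i ≤ n by omega, if_true, if_false, show n - i = 0 by omega]
      rwa [← commutator_def]

theorem IsPowerfullyNilpotent.of_mulEquiv (e : G ≃* G') (h : IsPowerfullyNilpotent p G) :
    IsPowerfullyNilpotent p G' := by
  obtain ⟨⟨hpg, hpow⟩, k, H, h0, hk, hmono, hcomm⟩ := h
  have htop : (⊤ : Subgroup G).map e.toMonoidHom = ⊤ :=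
    Subgroup.map_top_of_surjective _ e.surjective
  have hmap : commutator G' = (commutator G).map e.toMonoidHom := by
    rw [commutator_def, commutator_def, Subgroup.map_commutator, htop]
  have hpPow (q : ℕ) :
      (⊤ : Subgroup G').pPow q = ((⊤ : Subgroup G).pPow q).map e.toMonoidHom := by
    rw [Subgroup.map_pPow, htop]
  refine ⟨⟨hpg.of_equiv e, ?_⟩, k, fun i => (H i).map e.toMonoidHom, by simp [h0],
    by simp [hk], fun i hi => Subgroup.map_mono (hmono i hi), fun i hi => ?_⟩
  · rw [hmap, hpPow, hpPow]
    exact hpow.imp (And.imp_right (Subgroup.map_mono ·)) (And.imp_right (Subgroup.map_mono ·))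
  · rw [← htop, ← Subgroup.map_commutator, ← Subgroup.map_pPow]
    exact Subgroup.map_mono (hcomm i hi)

end Powerful

section CyclicLift

variable {G : Type*} [Group G] {k : ℕ}

theorem MonoidHom.ext_mzmod {f g : Multiplicative (ZMod k) →* G}
    (h : f (ofAdd 1) = g (ofAdd 1)) : f = g := by
  refine MonoidHom.ext fun x => ?_
  obtain ⟨j, hj⟩ := ZMod.intCast_surjective (toAdd x)
  rw [← ofAdd_toAdd x, ← hj, ← zsmul_one, ofAdd_zsmul, map_zpow, map_zpow, h]

def zmodPowersHom (g : G) (hg : g ^ k = 1) : Multiplicative (ZMod k) →* G :=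
  AddMonoidHom.toMultiplicativeLeft <|
    ZMod.lift k ⟨zmultiplesHom (Additive G) (Additive.ofMul g), by simp [← ofMul_pow, hg]⟩

theorem zmodPowersHom_ofAdd_intCast {g : G} (hg : g ^ k = 1) (j : ℤ) :
    zmodPowersHom g hg (ofAdd (j : ZMod k)) = g ^ j := by
  change Additive.toMul (ZMod.lift k _ (j : ZMod k)) = g ^ j
  rw [ZMod.lift_coe]
  simp

theorem zmodPowersHom_ofAdd_one {g : G} (hg : g ^ k = 1) :
    zmodPowersHom g hg (ofAdd 1) = g := by
  simpa using zmodPowersHom_ofAdd_intCast hg 1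

theorem MulAut.comp_eq_conj_comp_of_zmod {K : Type*} [Group K] [NeZero k]
    {φ : Multiplicative (ZMod k) →* MulAut K} {f : K →* G} {g : Multiplicative (ZMod k) →* G}
    (h : f.comp (φ (ofAdd 1)).toMonoidHom = (MulAut.conj (g (ofAdd 1))).toMonoidHom.comp f)
    (c : Multiplicative (ZMod k)) :
    f.comp (φ c).toMonoidHom = (MulAut.conj (g c)).toMonoidHom.comp f := by
  have h1 (x : K) : f (φ (ofAdd 1) x) = g (ofAdd 1) * f x * (g (ofAdd 1))⁻¹ :=
    DFunLike.congr_fun h x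
  have hpow (t : ℕ) (x : K) :
      f (φ (ofAdd 1 ^ t) x) = g (ofAdd 1 ^ t) * f x * (g (ofAdd 1 ^ t))⁻¹ := by
    induction t generalizing x with
    | zero => simp
    | succ t ih =>
      simp only [pow_succ, map_mul, MulAut.mul_apply, ih, h1]
      group
  ext x
  rw [← ofAdd_toAdd c, ← ZMod.natCast_zmod_val (toAdd c), ← nsmul_one, ofAdd_nsmul]
  exact hpow _ x

end CyclicLift

def Units.mulLeftMulAut (R : Type*) [Semiring R] : Rˣ →* MulAut (Multiplicative R) where
  toFun v := AddEquiv.toMultiplicative (DistribMulAction.toAddAut Rˣ R v)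
  map_one' := by ext; simp
  map_mul' _ _ := by ext; simp [mul_smul]

theorem Units.mulLeftMulAut_apply {R : Type*} [Semiring R] (v : Rˣ) (z : Multiplicative R) :
    Units.mulLeftMulAut R v z = ofAdd (v * toAdd z) := rfl

theorem Units.mulLeftMulAut_symm_apply {R : Type*} [Semiring R] (v : Rˣ)
    (z : Multiplicative R) : (Units.mulLeftMulAut R v).symm z = ofAdd (↑v⁻¹ * toAdd z) := rfl

abbrev SplitMetacyclic {N M : ℕ} (χ : Multiplicative (ZMod M) →* (ZMod N)ˣ) : Type :=
  Multiplicative (ZMod N) ⋊[(Units.mulLeftMulAut (ZMod N)).comp χ] Multiplicative (ZMod M)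

namespace SplitMetacyclic

section General

variable {N M : ℕ} (χ : Multiplicative (ZMod M) →* (ZMod N)ˣ)

theorem card : Nat.card (SplitMetacyclic χ) = N * M := by
  rw [SemidirectProduct.card, Nat.card_congr toAdd, Nat.card_congr toAdd, Nat.card_zmod,
    Nat.card_zmod]

theorem inl_ofAdd_pow (x : ZMod N) (k : ℕ) :
    (inl (ofAdd x) : SplitMetacyclic χ) ^ k = inl (ofAdd (k * x)) := by
  rw [← map_pow, ← ofAdd_nsmul, nsmul_eq_mul]

theorem inr_ofAdd_one_pow_self : (inr (ofAdd (1 : ZMod M)) : SplitMetacyclic χ) ^ M = 1 := by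
  rw [← map_pow, ← ofAdd_nsmul, nsmul_one, ZMod.natCast_self, ofAdd_zero, map_one]

theorem commutatorElement_inl (z : Multiplicative (ZMod N)) (g : SplitMetacyclic χ) :
    ⁅(inl z : SplitMetacyclic χ), g⁆ = inl (ofAdd ((1 - χ g.right) * toAdd z)) := by
  ext
  · simp only [commutatorElement_def, mul_left, left_inl, right_inl, MonoidHom.coe_comp,
      Function.comp_apply, map_one, MulAut.one_apply, mul_right, one_mul, inv_left, inv_one,
      Units.mulLeftMulAut_apply, toAdd_inv, inv_right, mul_one, map_inv, MulAut.inv_apply,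
      Units.mulLeftMulAut_symm_apply, toAdd_ofAdd, Units.mul_inv_cancel_left, ofAdd_toAdd,
      toAdd_mul]
    ring
  · simp [commutatorElement_def]

theorem not_forall_mul_comm (hχ : χ (ofAdd 1) ≠ 1) :
    ¬∀ x y : SplitMetacyclic χ, x * y = y * x := by
  intro h
  have hc := commutatorElement_eq_one_iff_mul_comm.mpr (h (inl (ofAdd 1)) (inr (ofAdd 1)))
  rw [commutatorElement_inl, map_eq_one_iff _ inl_injective, right_inr, toAdd_ofAdd, mul_one,
    ofAdd_eq_one, sub_eq_zero] at hc
  exact hχ (Units.ext hc.symm)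

theorem one_sub_dvd_one_sub_apply [NeZero M] (c : Multiplicative (ZMod M)) :
    1 - (χ (ofAdd 1) : ZMod N) ∣ 1 - χ c := by
  rw [← ofAdd_toAdd c, ← ZMod.natCast_zmod_val (toAdd c), ← nsmul_one, ofAdd_nsmul, map_pow,
    Units.val_pow_eq_pow_val]
  simpa using sub_dvd_pow_sub_pow (1 : ZMod N) _ (toAdd c).val

end General

section PowSubgroup

variable {N M : ℕ} {χ : Multiplicative (ZMod M) →* (ZMod N)ˣ} {p r : ℕ}

variable (χ p) in
def powSubgroup (k : ℕ) : Subgroup (SplitMetacyclic χ) :=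
  Subgroup.zpowers (inl (ofAdd ((p : ZMod N) ^ k)))

theorem mem_powSubgroup_iff {k : ℕ} {g : SplitMetacyclic χ} :
    g ∈ powSubgroup χ p k ↔ ∃ c : ZMod N, g = inl (ofAdd ((p : ZMod N) ^ k * c)) := by
  rw [powSubgroup, Subgroup.mem_zpowers_iff]
  constructor
  · rintro ⟨j, rfl⟩
    exact ⟨j, by rw [← map_zpow, ← ofAdd_zsmul, zsmul_eq_mul, mul_comm]⟩
  · rintro ⟨c, rfl⟩
    obtain ⟨j, rfl⟩ := ZMod.intCast_surjective c
    exact ⟨j, by rw [← map_zpow, ← ofAdd_zsmul, zsmul_eq_mul, mul_comm]⟩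

theorem powSubgroup_add_le_pPow (k s : ℕ) :
    powSubgroup χ p (k + s) ≤ (powSubgroup χ p k).pPow (p ^ s) := by
  have h := Subgroup.pow_mem_pPow
    (Subgroup.mem_zpowers (inl (ofAdd ((p : ZMod N) ^ k)) : SplitMetacyclic χ)) (p ^ s)
  rw [inl_ofAdd_pow, Nat.cast_pow, ← pow_add, add_comm] at h
  exact Subgroup.zpowers_le.mpr h

theorem powSubgroup_antitone : Antitone (powSubgroup χ p) :=
  antitone_nat_of_succ_le fun k => by
    refine (powSubgroup_add_le_pPow k 1).trans ((Subgroup.closure_le _).mpr ?_)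
    rintro _ ⟨x, hx, rfl⟩
    exact Subgroup.pow_mem _ hx _

theorem powSubgroup_self {n : ℕ} (χ : Multiplicative (ZMod M) →* (ZMod (p ^ n))ˣ) :
    powSubgroup χ p n = ⊥ := by
  rw [powSubgroup, ← Nat.cast_pow, ZMod.natCast_self, ofAdd_zero, map_one,
    Subgroup.zpowers_one_eq_bot]

variable [NeZero M]

theorem commutator_powSubgroup_le (hχ : (p : ZMod N) ^ r ∣ 1 - χ (ofAdd 1)) (k : ℕ) :
    ⁅powSubgroup χ p k, ⊤⁆ ≤ powSubgroup χ p (k + r) := by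
  rw [Subgroup.commutator_le]
  rintro _ hz g -
  obtain ⟨c, rfl⟩ := mem_powSubgroup_iff.mp hz
  obtain ⟨d, hd⟩ := hχ.trans (one_sub_dvd_one_sub_apply χ g.right)
  refine mem_powSubgroup_iff.mpr ⟨d * c, ?_⟩
  rw [commutatorElement_inl, toAdd_ofAdd, hd]
  ring_nf

def reduceMod (hχ : (p : ZMod N) ^ r ∣ 1 - χ (ofAdd 1)) :
    SplitMetacyclic χ →*
      Multiplicative (ZMod N ⧸ Ideal.span {(p : ZMod N) ^ r}) × Multiplicative (ZMod M) where
  toFun g := (ofAdd (Ideal.Quotient.mk _ (toAdd g.left)), g.right)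
  map_one' := by simp
  map_mul' g h := by
    have hχ1 : Ideal.Quotient.mk (Ideal.span {(p : ZMod N) ^ r}) (χ g.right) = 1 := by
      rw [← map_one (Ideal.Quotient.mk _), Ideal.Quotient.eq, ← neg_mem_iff, neg_sub,
        Ideal.mem_span_singleton]
      exact hχ.trans (one_sub_dvd_one_sub_apply χ g.right)
    ext
    · simp [Units.mulLeftMulAut_apply, hχ1]
    · rfl

theorem commutator_le_powSubgroup (hχ : (p : ZMod N) ^ r ∣ 1 - χ (ofAdd 1)) :
    commutator (SplitMetacyclic χ) ≤ powSubgroup χ p r := by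
  intro g hg
  have hq := Abelianization.commutator_subset_ker (reduceMod hχ) hg
  simp only [MonoidHom.mem_ker, reduceMod, MonoidHom.coe_mk, OneHom.coe_mk, Prod.mk_eq_one,
    ofAdd_eq_one, Ideal.Quotient.eq_zero_iff_mem, Ideal.mem_span_singleton] at hq
  obtain ⟨⟨c, hc⟩, hright⟩ := hq
  refine mem_powSubgroup_iff.mpr ⟨c, ?_⟩
  rw [← inl_left_mul_inr_right g, hright, map_one, mul_one, ← hc, ofAdd_toAdd]

end PowSubgroup

theorem isPowerfullyNilpotent {p n m r : ℕ}
    {χ : Multiplicative (ZMod (p ^ m)) →* (ZMod (p ^ n))ˣ} (hp : p.Prime) (hr : 2 ≤ r)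
    (hχ : (p : ZMod (p ^ n)) ^ r ∣ 1 - χ (ofAdd 1)) :
    IsPowerfullyNilpotent p (SplitMetacyclic χ) := by
  have : NeZero p := ⟨hp.ne_zero⟩
  have hcomm := commutator_le_powSubgroup hχ
  have hA := powSubgroup_antitone (χ := χ) (p := p)
  have hpow (k : ℕ) : powSubgroup χ p (k + 1) ≤ (powSubgroup χ p k).pPow p := by
    simpa using powSubgroup_add_le_pPow (χ := χ) k 1
  refine IsPowerfullyNilpotent.of_antitone ?_ hA (powSubgroup_self χ) (fun k => ?_)
    (hcomm.trans ((hA (by omega)).trans (hpow 0)))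
  · refine .of_commutator_le_pPow_sq hp (.of_card (by rw [card, ← pow_add])) ?_
    refine hcomm.trans ((hA hr).trans ?_)
    exact (powSubgroup_add_le_pPow 0 2).trans (Subgroup.pPow_mono le_top _)
  · exact (commutator_powSubgroup_le hχ k).trans ((hA (by omega)).trans (hpow (k + 1)))

end SplitMetacyclic

namespace GSplit

variable {p n m r : ℕ}

variable (p n m r) in
def a : GSplit p n m r := PresentedGroup.of 0

variable (p n m r) in
def b : GSplit p n m r := PresentedGroup.of 1

theorem a_pow : a p n m r ^ p ^ n = 1 :=
  (map_pow _ _ _).symm.trans (PresentedGroup.one_of_mem (Set.mem_insert _ _))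

theorem b_pow : b p n m r ^ p ^ m = 1 :=
  (map_pow _ _ _).symm.trans
    (PresentedGroup.one_of_mem (Set.mem_insert_of_mem _ (Set.mem_insert _ _)))

theorem commutatorElement_a_b : ⁅a p n m r, b p n m r⁆ = a p n m r ^ p ^ r := by
  have h := PresentedGroup.one_of_mem (rels := splitRels p n m r)
    (Set.mem_insert_of_mem _ (Set.mem_insert_of_mem _ rfl))
  rwa [map_mul, map_inv, map_pow, map_commutatorElement, mul_inv_eq_one] at h

theorem b_mul_a_mul_b_inv :
    b p n m r * a p n m r * (b p n m r)⁻¹ = a p n m r ^ (1 - (p : ℤ) ^ r) := by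
  calc b p n m r * a p n m r * (b p n m r)⁻¹
      = ((a p n m r)⁻¹ * ⁅a p n m r, b p n m r⁆)⁻¹ := by rw [commutatorElement_def]; group
    _ = a p n m r ^ (1 - (p : ℤ) ^ r) := by
      rw [commutatorElement_a_b, mul_inv_rev, inv_inv, ← zpow_natCast, ← zpow_neg,
        ← zpow_add_one]
      push_cast
      ring_nf

variable {u : (ZMod (p ^ n))ˣ}

def toSplitMetacyclic (hu : (u : ZMod (p ^ n)) = 1 - p ^ r) (hum : u ^ p ^ m = 1) :
    GSplit p n m r →* SplitMetacyclic (zmodPowersHom u hum) :=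
  PresentedGroup.toGroup (f := ![inl (ofAdd 1), inr (ofAdd 1)]) <| by
    rintro _ (rfl | rfl | rfl) <;>
      simp [SplitMetacyclic.inr_ofAdd_one_pow_self, SplitMetacyclic.commutatorElement_inl,
        SplitMetacyclic.inl_ofAdd_pow, zmodPowersHom_ofAdd_one, hu]

def ofSplitMetacyclic [NeZero p] (hu : (u : ZMod (p ^ n)) = 1 - p ^ r) (hum : u ^ p ^ m = 1) :
    SplitMetacyclic (zmodPowersHom u hum) →* GSplit p n m r :=
  SemidirectProduct.lift (zmodPowersHom (a p n m r) a_pow) (zmodPowersHom (b p n m r) b_pow)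
    (MulAut.comp_eq_conj_comp_of_zmod <| MonoidHom.ext_mzmod <| by
      have hu' : u * (1 : ZMod (p ^ n)) = ((1 - (p : ℤ) ^ r : ℤ) : ZMod (p ^ n)) := by
        push_cast; rw [mul_one, hu]
      simp only [MonoidHom.comp_apply, MulEquiv.coe_toMonoidHom, Units.mulLeftMulAut_apply,
        toAdd_ofAdd, zmodPowersHom_ofAdd_one, hu', zmodPowersHom_ofAdd_intCast,
        MulAut.conj_apply, b_mul_a_mul_b_inv])

def mulEquivSplitMetacyclic [NeZero p] (hu : (u : ZMod (p ^ n)) = 1 - p ^ r)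
    (hum : u ^ p ^ m = 1) : GSplit p n m r ≃* SplitMetacyclic (zmodPowersHom u hum) :=
  MonoidHom.toMulEquiv (toSplitMetacyclic hu hum) (ofSplitMetacyclic hu hum)
    (PresentedGroup.ext fun i => by
      fin_cases i <;> simp [toSplitMetacyclic, ofSplitMetacyclic, zmodPowersHom_ofAdd_one, a, b])
    (SemidirectProduct.hom_ext
      (MonoidHom.ext_mzmod <| by
        simp [toSplitMetacyclic, ofSplitMetacyclic, zmodPowersHom_ofAdd_one, a])
      (MonoidHom.ext_mzmod <| by
        simp [toSplitMetacyclic, ofSplitMetacyclic, zmodPowersHom_ofAdd_one, b]))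

end GSplit

theorem ZMod.exists_unit_eq_one_sub_prime_pow {p n r : ℕ} (hp : p.Prime) (hr : 2 ≤ r)
    (hrn : r ≤ n) :
    ∃ u : (ZMod (p ^ n))ˣ, (u : ZMod (p ^ n)) = 1 - p ^ r ∧ orderOf u = p ^ (n - r) := by
  have h := ZMod.orderOf_one_add_mul_prime_pow hp r (by omega) (by nlinarith [hp.two_le]) (-1)
    (by simpa [Int.natCast_dvd] using hp.ne_one) (n - r)
  rw [Nat.sub_add_cancel hrn] at h
  have hord : orderOf (1 - (p : ZMod (p ^ n)) ^ r) = p ^ (n - r) := by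
    simpa [sub_eq_add_neg] using h
  have hfin : IsOfFinOrder (1 - (p : ZMod (p ^ n)) ^ r) :=
    orderOf_pos_iff.mp (hord ▸ pow_pos hp.pos _)
  exact ⟨hfin.isUnit.unit, rfl, by rw [← orderOf_units, IsUnit.unit_spec, hord]⟩

/-- For `2 ≤ r ≤ n - 1` and `n - r ≤ m`, the group `G(n,m,r)` has order `p^(n+m)`,
is non-abelian, and is powerfully nilpotent. -/
theorem gSplit_card_nonabelian_powerfullyNilpotent
    (p n m r : ℕ) (hp : p.Prime) (hr : 2 ≤ r) (hrn : r + 1 ≤ n) (hm : n - r ≤ m) :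
    Nat.card (GSplit p n m r) = p ^ (n + m) ∧
    (¬∀ x y : GSplit p n m r, x * y = y * x) ∧
    IsPowerfullyNilpotent p (GSplit p n m r) := by
  have : NeZero p := ⟨hp.ne_zero⟩
  obtain ⟨u, hu, hord⟩ := ZMod.exists_unit_eq_one_sub_prime_pow hp hr (by omega : r ≤ n)
  have hum : u ^ p ^ m = 1 := orderOf_dvd_iff_pow_eq_one.mp (hord ▸ pow_dvd_pow p hm)
  have hχ : zmodPowersHom u hum (ofAdd 1) ≠ 1 := by
    rw [zmodPowersHom_ofAdd_one]
    rintro rfl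
    rw [orderOf_one] at hord
    exact (Nat.one_lt_pow (by omega) hp.one_lt).ne hord
  let e := GSplit.mulEquivSplitMetacyclic hu hum
  refine ⟨?_, fun h => ?_, ?_⟩
  · rw [Nat.card_congr e.toEquiv, SplitMetacyclic.card, pow_add]
  · exact SplitMetacyclic.not_forall_mul_comm _ hχ fun x y =>
      e.symm.injective (by rw [map_mul, map_mul, h])
  · refine (SplitMetacyclic.isPowerfullyNilpotent hp hr ?_).of_mulEquiv e.symm
    rw [zmodPowersHom_ofAdd_one, hu, sub_sub_cancel]
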